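/- For every m ≥ 1, every l ∈ ℕ, every y ∈ ℝ^m, and every u ∈ (0,1): ∑_{a ∈ ℕ^m, a₁+⋯+a_m = l} He_a(y)² / l! ≤ u^{−l} · (1 − u²)^{−m/2} · exp(u·‖y‖₂² / (1 + u)). -/

import Mathlib

/-!
Fix one coordinate, let `γ(t) = exp (-t²/2)` and let `G` be the unnormalised Gaussian density
with mean `x √u` and variance `1 - u`. Gaussian integration by parts gives the Hermite
coefficients `∫ Heₙ G = √(2π(1-u)) Heₙ(x) u^(n/2)` and the orthogonality
`∫ Heₘ Heₙ γ = δₘₙ n! √(2π)`. Bessel's inequality for `G/γ` in `L²(γ)` therefore bounds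
`∑_{n ≤ N} Heₙ(x)² uⁿ / n!` by the Gaussian integral `∫ G²/γ`, which equals
`(1-u²)^(-1/2) exp (u x² / (1+u))` up to the common factor `√(2π) (1-u)`.

For the multivariate slice, `∏ aᵢ! ≤ l!` bounds each term by
`u⁻ˡ ∏ Heₐᵢ(yᵢ)² u^aᵢ / aᵢ!`, and the sum over `|a| = l` of these products is at most
the product of the one-variable sums.
-/

open scoped BigOperators

/-- Probabilists' Hermite polynomials: `He 0 = 1`, `He 1 = id`,
`He (a+1) x = x * He a x - a * He (a-1) x`. -/
noncomputable def He : ℕ → ℝ → ℝ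
  | 0, _ => 1
  | 1, x => x
  | (n + 2), x => x * He (n + 1) x - ((n : ℝ) + 1) * He n x

open Polynomial Real MeasureTheory
open scoped Nat

namespace Polynomial

theorem derivative_hermite_succ (n : ℕ) :
    derivative (hermite (n + 1)) = (n + 1 : ℤ[X]) * hermite n := by
  induction n with
  | zero => simp
  | succ n ih =>
    rw [hermite_succ (n + 1), derivative_sub, derivative_mul, ih, hermite_succ n]
    simp only [derivative_X, derivative_mul, derivative_add, derivative_natCast, derivative_one]
    push_cast
    ring

end Polynomial

local notation "𝓗" n:max => Polynomial.map (algebraMap ℤ ℝ) (hermite n)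

theorem map_hermite_succ (n : ℕ) : 𝓗 (n + 1) = X * 𝓗 n - derivative (𝓗 n) := by
  simp [hermite_succ, derivative_map]

theorem derivative_map_hermite_succ (n : ℕ) :
    derivative (𝓗 (n + 1)) = ((n : ℝ) + 1) • 𝓗 n := by
  rw [derivative_map, derivative_hermite_succ, Polynomial.map_mul, smul_eq_C_mul]
  simp

theorem natDegree_map_hermite (n : ℕ) : (𝓗 n).natDegree = n := by
  rw [natDegree_map_eq_of_injective (RingHom.injective_int _), natDegree_hermite]

-- The unnormalised density of the normal law with mean `d` and variance `s`.
noncomputable def gaussWeight (d s t : ℝ) : ℝ := exp (-(t - d) ^ 2 / (2 * s))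

theorem hasDerivAt_gaussWeight (d s t : ℝ) :
    HasDerivAt (gaussWeight d s) (-(t - d) / s * gaussWeight d s t) t := by
  have h := ((((hasDerivAt_id' t).sub_const d).fun_pow 2).fun_neg.div_const (2 * s)).exp
  exact h.congr_deriv (by simp only [gaussWeight]; ring)

theorem integral_gaussWeight (d s : ℝ) : ∫ t, gaussWeight d s t = √(2 * π * s) := by
  have h := integral_sub_right_eq_self (μ := volume) (fun τ : ℝ => exp (-(2 * s)⁻¹ * τ ^ 2)) d
  rw [integral_gaussian, div_inv_eq_mul] at h
  rw [show 2 * π * s = π * (2 * s) by ring, ← h]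
  congr 1 with t
  simp only [gaussWeight]
  ring_nf

theorem gaussWeight_sq_div_gaussWeight (x v t : ℝ) (hv : 0 < 1 - v ^ 2) :
    gaussWeight (x * v) (1 - v ^ 2) t ^ 2 / gaussWeight 0 1 t =
      exp (x ^ 2 * v ^ 2 / (1 + v ^ 2)) *
        gaussWeight (2 * x * v / (1 + v ^ 2)) ((1 - v ^ 2) / (1 + v ^ 2)) t := by
  have : 0 < 1 + v ^ 2 := by positivity
  simp only [gaussWeight, sq (exp _), ← exp_add, ← exp_sub]
  congr 1
  field_simp
  ring

section GaussianFunctional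

variable (d : ℝ) {s : ℝ} (hs : 0 < s)

include hs in
theorem integrable_eval_mul_gaussWeight (p : ℝ[X]) :
    Integrable fun t => p.eval t * gaussWeight d s t := by
  have hmonomial (k : ℕ) : Integrable fun τ : ℝ => τ ^ k * exp (-(2 * s)⁻¹ * τ ^ 2) := by
    simpa using integrable_rpow_mul_exp_neg_mul_sq (b := (2 * s)⁻¹) (by positivity) (s := k)
      (by linarith [k.cast_nonneg (α := ℝ)])
  set q := p.comp (X + C d)
  have hq : Integrable fun τ : ℝ => q.eval τ * exp (-(2 * s)⁻¹ * τ ^ 2) := by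
    simp_rw [eval_eq_sum_range, Finset.sum_mul, mul_assoc]
    exact integrable_finsetSum _ fun k _ => (hmonomial k).const_mul _
  refine (hq.comp_sub_right d).congr (Filter.Eventually.of_forall fun t => ?_)
  simp [q, gaussWeight, div_eq_inv_mul, mul_comm]

noncomputable def gaussianFunctional : ℝ[X] →ₗ[ℝ] ℝ where
  toFun p := ∫ t, p.eval t * gaussWeight d s t
  map_add' p q := by
    simp only [eval_add, add_mul]
    exact integral_add (integrable_eval_mul_gaussWeight d hs p)
      (integrable_eval_mul_gaussWeight d hs q)
  map_smul' c p := by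
    simp only [eval_smul, smul_eq_mul, mul_assoc, integral_const_mul, RingHom.id_apply]

theorem gaussianFunctional_apply (p : ℝ[X]) :
    gaussianFunctional d hs p = ∫ t, p.eval t * gaussWeight d s t := rfl

theorem gaussianFunctional_one : gaussianFunctional d hs 1 = √(2 * π * s) := by
  simp [gaussianFunctional_apply, integral_gaussWeight]

-- Gaussian integration by parts (Stein's identity).
theorem gaussianFunctional_X_sub_C_mul (p : ℝ[X]) :
    gaussianFunctional d hs ((X - C d) * p) = s * gaussianFunctional d hs (derivative p) := by
  have hpoint (t : ℝ) : ((X - C d) * p).eval t * gaussWeight d s t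
      = -s * (p.eval t * (-(t - d) / s * gaussWeight d s t)) := by
    simp only [eval_mul, eval_sub, eval_X, eval_C]
    field_simp
  have hibp := integral_mul_deriv_eq_deriv_mul_of_integrable
    (fun t _ => p.hasDerivAt t) (fun t _ => hasDerivAt_gaussWeight d s t)
    (((integrable_eval_mul_gaussWeight d hs ((X - C d) * p)).const_mul (-s⁻¹)).congr
      (Filter.Eventually.of_forall fun t => by simp only [Pi.mul_apply, hpoint]; field_simp))
    (integrable_eval_mul_gaussWeight d hs _) (integrable_eval_mul_gaussWeight d hs p)
  simp only [gaussianFunctional_apply, hpoint, integral_const_mul, hibp]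
  ring

theorem gaussianFunctional_X_mul (p : ℝ[X]) :
    gaussianFunctional d hs (X * p) =
      d * gaussianFunctional d hs p + s * gaussianFunctional d hs (derivative p) := by
  rw [← gaussianFunctional_X_sub_C_mul, show X * p = (X - C d) * p + C d * p by ring,
    map_add, ← smul_eq_C_mul, map_smul, smul_eq_mul, add_comm]

end GaussianFunctional

section Orthogonality

local notation "γ" => gaussianFunctional 0 one_pos

theorem gaussianFunctional_map_hermite_succ_mul (m : ℕ) (q : ℝ[X]) :
    γ (𝓗 (m + 1) * q) = γ (𝓗 m * derivative q) := by
  have h := gaussianFunctional_X_mul 0 one_pos (𝓗 m * q)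
  rw [zero_mul, zero_add, one_mul, derivative_mul, map_add] at h
  rw [map_hermite_succ, sub_mul, map_sub, mul_assoc, h, add_sub_cancel_left]

theorem gaussianFunctional_map_hermite_mul (m : ℕ) (q : ℝ[X]) :
    γ (𝓗 m * q) = γ (derivative^[m] q) := by
  induction m generalizing q with
  | zero => simp
  | succ m ih => rw [gaussianFunctional_map_hermite_succ_mul, ih, Function.iterate_succ_apply]

theorem gaussianFunctional_map_hermite_mul_self (n : ℕ) :
    γ (𝓗 n * 𝓗 n) = n ! * √(2 * π) := by
  induction n with
  | zero => simp [gaussianFunctional_one]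
  | succ n ih =>
    rw [gaussianFunctional_map_hermite_succ_mul, derivative_map_hermite_succ, mul_smul_comm,
      map_smul, ih, smul_eq_mul, Nat.factorial_succ]
    push_cast
    ring

theorem gaussianFunctional_map_hermite_mul_map_hermite (m n : ℕ) :
    γ (𝓗 m * 𝓗 n) = if m = n then n ! * √(2 * π) else 0 := by
  have h_lt {m n : ℕ} (h : n < m) : γ (𝓗 m * 𝓗 n) = 0 := by
    rw [gaussianFunctional_map_hermite_mul,
      iterate_derivative_eq_zero ((natDegree_map_hermite n).trans_lt h), map_zero]
  rcases lt_trichotomy m n with h | rfl | h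
  · rw [mul_comm, h_lt h, if_neg h.ne]
  · rw [if_pos rfl, gaussianFunctional_map_hermite_mul_self]
  · rw [h_lt h, if_neg h.ne']

-- Bessel's inequality in `L²(γ)` for `G / γ`, whose Hermite coefficients are `∫ Heₙ G`.
theorem sum_sq_integral_mul_map_hermite_le (G : ℝ → ℝ)
    (hG : Integrable fun t => G t ^ 2 / gaussWeight 0 1 t)
    (hGH : ∀ n, Integrable fun t => (𝓗 n).eval t * G t) (N : ℕ) :
    ∑ n ∈ Finset.range N, (∫ t, (𝓗 n).eval t * G t) ^ 2 / (n ! * √(2 * π))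
      ≤ ∫ t, G t ^ 2 / gaussWeight 0 1 t := by
  set a : ℕ → ℝ := fun n => ∫ t, (𝓗 n).eval t * G t
  set S := ∑ n ∈ Finset.range N, a n ^ 2 / (n ! * √(2 * π))
  set P : ℝ[X] := ∑ n ∈ Finset.range N, (a n / (n ! * √(2 * π))) • 𝓗 n
  have hPGint : Integrable fun t => P.eval t * G t := by
    simp only [P, eval_finsetSum, eval_smul, smul_eq_mul, Finset.sum_mul, mul_assoc]
    exact integrable_finsetSum _ fun n _ => (hGH n).const_mul _
  have hPG : ∫ t, P.eval t * G t = S := by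
    simp only [P, eval_finsetSum, eval_smul, smul_eq_mul, Finset.sum_mul, mul_assoc]
    rw [integral_finsetSum _ fun n _ => (hGH n).const_mul _]
    simp only [integral_const_mul, S, a]
    exact Finset.sum_congr rfl fun n _ => by ring
  have hPP : γ (P * P) = S := by
    simp only [P, Finset.sum_mul_sum, map_sum, smul_mul_smul_comm, map_smul, smul_eq_mul,
      gaussianFunctional_map_hermite_mul_map_hermite, mul_ite, mul_zero, Finset.sum_ite_eq,
      Finset.mem_range]
    refine Finset.sum_congr rfl fun n hn => ?_
    rw [if_pos (Finset.mem_range.1 hn)]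
    have : (n ! : ℝ) * √(2 * π) ≠ 0 := by positivity
    field_simp
  have hγ (t : ℝ) : 0 < gaussWeight 0 1 t := exp_pos _
  have hexpand (t : ℝ) : (G t - P.eval t * gaussWeight 0 1 t) ^ 2 / gaussWeight 0 1 t
      = G t ^ 2 / gaussWeight 0 1 t - 2 * (P.eval t * G t)
        + (P * P).eval t * gaussWeight 0 1 t := by
    rw [eval_mul]
    field_simp [(hγ t).ne']
    ring
  have hnonneg : 0 ≤ ∫ t, (G t - P.eval t * gaussWeight 0 1 t) ^ 2 / gaussWeight 0 1 t :=
    integral_nonneg fun t => div_nonneg (sq_nonneg _) (hγ t).le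
  simp_rw [hexpand] at hnonneg
  rw [integral_add (f := fun t => G t ^ 2 / gaussWeight 0 1 t - 2 * (P.eval t * G t))
    (hG.sub (hPGint.const_mul 2)) (integrable_eval_mul_gaussWeight 0 one_pos _),
    integral_sub hG (hPGint.const_mul 2), integral_const_mul, hPG,
    ← gaussianFunctional_apply 0 one_pos, hPP] at hnonneg
  linarith

end Orthogonality

theorem gaussianFunctional_map_hermite (x v : ℝ) (hv : 0 < 1 - v ^ 2) (n : ℕ) :
    gaussianFunctional (x * v) hv (𝓗 n) = √(2 * π * (1 - v ^ 2)) * (He n x * v ^ n) := by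
  set L := gaussianFunctional (x * v) hv
  have hL (p : ℝ[X]) : L (X * p) = x * v * L p + (1 - v ^ 2) * L (derivative p) :=
    gaussianFunctional_X_mul _ hv p
  induction n using Nat.twoStepInduction with
  | zero => simp [L, gaussianFunctional_one, He]
  | one =>
    have h := hL 1
    simp only [mul_one, derivative_one, map_zero, mul_zero, add_zero] at h
    simp [L, h, gaussianFunctional_one, He]
    ring
  | more n ih₀ ih₁ =>
    rw [map_hermite_succ, map_sub, hL, derivative_map_hermite_succ, map_smul, smul_eq_mul, ih₀,
      ih₁, He]
    ring

theorem sum_He_sq_mul_pow_div_factorial_le (x : ℝ) {u : ℝ} (hu0 : 0 ≤ u) (hu1 : u < 1)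
    (N : ℕ) :
    ∑ n ∈ Finset.range N, He n x ^ 2 * u ^ n / n !
      ≤ (1 - u ^ 2) ^ (-(1 / 2 : ℝ)) * exp (u * x ^ 2 / (1 + u)) := by
  set v := √u
  have hvu : v ^ 2 = u := sq_sqrt hu0
  have hs : 0 < 1 - v ^ 2 := by linarith
  have hs' : 0 < (1 - v ^ 2) / (1 + v ^ 2) := by positivity
  set G := gaussWeight (x * v) (1 - v ^ 2)
  have hG : Integrable fun t => G t ^ 2 / gaussWeight 0 1 t := by
    simp only [G, gaussWeight_sq_div_gaussWeight x v _ hs]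
    simpa using integrable_eval_mul_gaussWeight _ hs' (C (exp (x ^ 2 * v ^ 2 / (1 + v ^ 2))))
  have hbessel := sum_sq_integral_mul_map_hermite_le G hG
    (fun n => integrable_eval_mul_gaussWeight _ hs (𝓗 n)) N
  simp only [G, gaussWeight_sq_div_gaussWeight x v _ hs, integral_const_mul, integral_gaussWeight,
    ← gaussianFunctional_apply _ hs, gaussianFunctional_map_hermite] at hbessel
  rw [hvu] at hbessel
  have h2π : √(2 * π) ^ 2 = 2 * π := sq_sqrt (by positivity)
  have hterm (n : ℕ) : (√(2 * π * (1 - u)) * (He n x * v ^ n)) ^ 2 / (n ! * √(2 * π))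
      = √(2 * π) * (1 - u) * (He n x ^ 2 * u ^ n / n !) := by
    rw [mul_pow, mul_pow, sq_sqrt (by positivity), ← pow_mul, mul_comm n 2, pow_mul, hvu]
    field_simp
    linear_combination -(1 - u) * He n x ^ 2 * u ^ n * h2π
  have hbound : exp (x ^ 2 * u / (1 + u)) * √(2 * π * ((1 - u) / (1 + u)))
      = √(2 * π) * (1 - u) * ((1 - u ^ 2) ^ (-(1 / 2 : ℝ)) * exp (u * x ^ 2 / (1 + u))) := by
    have hu2 : 0 < 1 - u ^ 2 := by nlinarith
    rw [show (1 - u) / (1 + u) = (1 - u) ^ 2 / (1 - u ^ 2) by field_simp; ring,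
      sqrt_mul (by positivity), sqrt_div' _ hu2.le, sqrt_sq (by linarith),
      sqrt_eq_rpow (1 - u ^ 2), rpow_neg hu2.le,
      show x ^ 2 * u / (1 + u) = u * x ^ 2 / (1 + u) by ring]
    ring
  simp only [hterm, ← Finset.mul_sum, hbound] at hbessel
  exact le_of_mul_le_mul_left hbessel (by have := pi_pos; positivity)

theorem sum_antidiagonalTuple_prod_le_prod_sum_range {m : ℕ} (l : ℕ) (g : Fin m → ℕ → ℝ)
    (hg : ∀ i n, 0 ≤ g i n) :
    ∑ a ∈ Finset.Nat.antidiagonalTuple m l, ∏ i, g i (a i)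
      ≤ ∏ i, ∑ n ∈ Finset.range (l + 1), g i n := by
  rw [Finset.prod_univ_sum]
  refine Finset.sum_le_sum_of_subset_of_nonneg (fun a ha => ?_)
    fun a _ _ => Finset.prod_nonneg fun i _ => hg i (a i)
  rw [Finset.Nat.mem_antidiagonalTuple] at ha
  simp only [Fintype.mem_piFinset, Finset.mem_range, Nat.lt_succ_iff]
  exact fun i => ha ▸ Finset.single_le_sum (fun j _ => Nat.zero_le (a j)) (Finset.mem_univ i)

theorem sq_prod_div_factorial_sum_le {ι : Type*} [Fintype ι] (a : ι → ℕ) (b : ι → ℝ) {u : ℝ}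
    (hu : 0 < u) :
    (∏ i, b i) ^ 2 / (∑ i, a i)! ≤ (u ^ ∑ i, a i)⁻¹ * ∏ i, b i ^ 2 * u ^ a i / (a i)! := by
  have hfac : (∏ i, (a i)! : ℝ) ≤ (∑ i, a i)! := by
    exact_mod_cast Nat.le_of_dvd (Nat.factorial_pos _) (Nat.prod_factorial_dvd_factorial_sum _ _)
  rw [Finset.prod_div_distrib, Finset.prod_mul_distrib, Finset.prod_pow,
    Finset.prod_pow_eq_pow_sum, mul_div_assoc', mul_comm ((∏ i, b i) ^ 2),
    inv_mul_cancel_left₀ (by positivity)]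
  exact div_le_div_of_nonneg_left (sq_nonneg _) (by positivity) hfac

theorem stmt8_general (m l : ℕ) (y : Fin m → ℝ) (u : ℝ) (hu0 : 0 < u) (hu1 : u < 1) :
    ∑ a ∈ Finset.Nat.antidiagonalTuple m l,
        (∏ i, He (a i) (y i)) ^ 2 / (l.factorial : ℝ)
      ≤ (u ^ l)⁻¹ * (1 - u ^ 2) ^ (-(m : ℝ) / 2)
          * Real.exp (u * (∑ i, (y i) ^ 2) / (1 + u)) := by
  set g : Fin m → ℕ → ℝ := fun i n => He n (y i) ^ 2 * u ^ n / (n ! : ℝ)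
  have hg (i : Fin m) (n : ℕ) : 0 ≤ g i n := by positivity
  have hu2 : 0 ≤ 1 - u ^ 2 := by nlinarith
  calc _ ≤ ∑ a ∈ Finset.Nat.antidiagonalTuple m l, (u ^ l)⁻¹ * ∏ i, g i (a i) :=
        Finset.sum_le_sum fun a ha => by
          simpa only [Finset.Nat.mem_antidiagonalTuple.mp ha] using
            sq_prod_div_factorial_sum_le a (fun i => He (a i) (y i)) hu0
    _ ≤ (u ^ l)⁻¹ * ∏ i, ∑ n ∈ Finset.range (l + 1), g i n := by
        rw [← Finset.mul_sum]
        gcongr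
        exact sum_antidiagonalTuple_prod_le_prod_sum_range l g hg
    _ ≤ (u ^ l)⁻¹ * ∏ i, ((1 - u ^ 2) ^ (-(1 / 2 : ℝ)) * exp (u * y i ^ 2 / (1 + u))) := by
        gcongr with i
        exact sum_He_sq_mul_pow_div_factorial_le (y i) hu0.le hu1 (l + 1)
    _ = _ := by
        rw [Finset.prod_mul_distrib, Finset.prod_const, ← exp_sum, Finset.card_univ,
          Fintype.card_fin, ← rpow_natCast (_ ^ _) m, ← rpow_mul hu2, ← Finset.sum_div,
          ← Finset.mul_sum, mul_assoc]
        congr 3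
        ring

/-- bound on the degree-`l` slice of the multivariate Mehler sum. -/
theorem stmt8 (m l : ℕ) (hm : 1 ≤ m) (y : Fin m → ℝ) (u : ℝ) (hu0 : 0 < u) (hu1 : u < 1) :
    ∑ a ∈ Finset.Nat.antidiagonalTuple m l,
        (∏ i, He (a i) (y i)) ^ 2 / (l.factorial : ℝ)
      ≤ (u ^ l)⁻¹ * (1 - u ^ 2) ^ (-(m : ℝ) / 2)
          * Real.exp (u * (∑ i, (y i) ^ 2) / (1 + u)) :=
  stmt8_general m l y u hu0 hu1
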